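/- (One iteration of Oblique Iterative Hard Thresholding.) Let Ψ, Ψ̃ ∈ K^{m×n}, let x* ∈ K^n be s-sparse, let z ∈ K^m and y = Ψx* + z, and let x ∈ K^n be s-sparse. Let x⁺ = H_s(x + Ψ̃*(y − Ψx)) be any best s-term approximation of x + Ψ̃*(y − Ψx). Then ‖x⁺ − x*‖₂ ≤ 2·θ_{3s}(Ψ̃*Ψ)·‖x − x*‖₂ + 2·√(1 + δ_{2s}(Ψ̃))·‖z‖₂. -/

import Mathlib

open scoped BigOperators
open Matrix MeasureTheory

noncomputable section

namespace ObliquePursuit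

variable {𝕜 : Type*} [RCLike 𝕜]

/-- The Euclidean (`ℓ²`) norm of a finitely indexed vector. -/
def l2 {ι : Type*} [Fintype ι] (x : ι → 𝕜) : ℝ :=
  Real.sqrt (∑ i, ‖x i‖ ^ 2)

/-- The spectral (`ℓ² → ℓ²` operator) norm of a matrix. -/
def specNorm {ι κ : Type*} [Fintype ι] [Fintype κ] [DecidableEq κ]
    (M : Matrix ι κ 𝕜) : ℝ :=
  ‖LinearMap.toContinuousLinearMap (Matrix.toEuclideanLin M)‖

/-- `x` is `s`-sparse: it has at most `s` nonzero entries. -/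
def Sparse {ι : Type*} (s : ℕ) (x : ι → 𝕜) : Prop :=
  ∃ J : Finset ι, J.card ≤ s ∧ ∀ i, x i ≠ 0 → i ∈ J

/-- The `s`-restricted biorthogonality constant `θ_s(M)`: the smallest `δ ≥ 0` such that
`|⟨y, Mx⟩ − ⟨y, x⟩| ≤ δ‖x‖₂‖y‖₂` for all `x, y` supported on a common index set of
cardinality at most `s`. -/
def theta {ι : Type*} [Fintype ι] (s : ℕ) (M : Matrix ι ι 𝕜) : ℝ :=
  sInf {δ : ℝ | 0 ≤ δ ∧ ∀ J : Finset ι, J.card ≤ s →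
    ∀ x y : ι → 𝕜, (∀ i, x i ≠ 0 → i ∈ J) → (∀ i, y i ≠ 0 → i ∈ J) →
      ‖star y ⬝ᵥ M.mulVec x - star y ⬝ᵥ x‖ ≤ δ * l2 x * l2 y}

/-- The `s`-restricted isometry constant `δ_s(Ψ)`. -/
def ric {ι κ : Type*} [Fintype ι] [Fintype κ] (s : ℕ) (Ψ : Matrix ι κ 𝕜) : ℝ :=
  sInf {δ : ℝ | 0 ≤ δ ∧ ∀ x : κ → 𝕜, Sparse s x →
    (1 - δ) * l2 x ^ 2 ≤ l2 (Ψ.mulVec x) ^ 2 ∧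
      l2 (Ψ.mulVec x) ^ 2 ≤ (1 + δ) * l2 x ^ 2}

/-- Coordinate projection `Π_J`: keep the entries indexed by `J`, zero out the others. -/
def proj {ι : Type*} [DecidableEq ι] (J : Finset ι) (x : ι → 𝕜) : ι → 𝕜 :=
  fun i => if i ∈ J then x i else 0

/-- The column submatrix `Ψ_J` of `Ψ` formed by the columns indexed by `J`. -/
def cols {ι κ : Type*} (Ψ : Matrix ι κ 𝕜) (J : Finset κ) :
    Matrix ι {j // j ∈ J} 𝕜 :=
  Ψ.submatrix id fun j => (j : κ)

/-- The `j`-th column of `Ψ`. -/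
def col {ι κ : Type*} (Ψ : Matrix ι κ 𝕜) (j : κ) : ι → 𝕜 :=
  fun i => Ψ i j

/-- The complementary oblique projector `E = I − Ψ_J (Ψ̃_J^* Ψ_J)⁻¹ Ψ̃_J^*`
(equal to `I` when `J = ∅`). -/
def obliqueE {ι κ : Type*} [Fintype ι] [DecidableEq ι] [DecidableEq κ]
    (Ψ Ψt : Matrix ι κ 𝕜) (J : Finset κ) : Matrix ι ι 𝕜 :=
  1 - cols Ψ J * ((cols Ψt J)ᴴ * cols Ψ J)⁻¹ * (cols Ψt J)ᴴ

/-- The smallest (real) eigenvalue of a matrix. -/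
def lamMin {ι : Type*} [Fintype ι] (G : Matrix ι ι 𝕜) : ℝ :=
  sInf {r : ℝ | ∃ v : ι → 𝕜, v ≠ 0 ∧ G.mulVec v = (r : 𝕜) • v}

/-- The `j`-th largest singular value (1-indexed) of a matrix, characterized via the
Eckart–Young–Mirsky theorem: `σ_j(A) = min { ‖A − B‖ : rank B < j }` where `‖·‖` is the
spectral norm. -/
def singVal {ι κ : Type*} [Fintype ι] [Fintype κ] [DecidableEq κ]
    (A : Matrix ι κ 𝕜) (j : ℕ) : ℝ :=
  sInf {r : ℝ | ∃ B : Matrix ι κ 𝕜, B.rank < j ∧ r = specNorm (A - B)}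

/-! Let `u = x + Ψ̃*(y − Ψx)` and let `T` be the union of the supports of `x⁺` and `x*`. Since `x⁺`
is at least as close to `u` as the `s`-sparse vector `x*`, and both vanish off `T`, we get
`‖x⁺ − x*‖ ≤ 2‖Π_T(u − x*)‖`. Now `u − x* = Ψ̃*z − (Ψ̃*Ψ − I)(x − x*)`. Testing
`(Ψ̃*Ψ − I)(x − x*)` against its own restriction to `T`, on the common support `T ∪ supp x` of
size `≤ 3s`, bounds that part by `θ_{3s}‖x − x*‖`; testing `Ψ̃*z` against its restriction `w` to `T`
gives `‖w‖² = |⟨Ψ̃w, z⟩| ≤ √(1 + δ_{2s}(Ψ̃))‖w‖‖z‖`. -/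

lemma le_csInf_mul {S : Set ℝ} (hS : S.Nonempty) {a c : ℝ} (ha : 0 ≤ a)
    (h : ∀ δ ∈ S, c ≤ δ * a) : c ≤ sInf S * a := by
  rcases ha.eq_or_lt with rfl | ha
  · obtain ⟨δ, hδ⟩ := hS
    simpa using h δ hδ
  · rw [← div_le_iff₀ ha]
    exact le_csInf hS fun δ hδ => (div_le_iff₀ ha).2 (h δ hδ)

lemma le_of_sq_le_mul {a b : ℝ} (hb : 0 ≤ b) (h : a ^ 2 ≤ b * a) : a ≤ b := by
  nlinarith

section L2

variable {ι κ : Type*} [Fintype ι] [Fintype κ]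

lemma l2_eq_norm_toLp (x : ι → 𝕜) : l2 x = ‖WithLp.toLp 2 x‖ := by
  rw [EuclideanSpace.norm_eq]; rfl

lemma l2_nonneg (x : ι → 𝕜) : 0 ≤ l2 x := Real.sqrt_nonneg _

lemma l2_sq (x : ι → 𝕜) : l2 x ^ 2 = ∑ i, ‖x i‖ ^ 2 :=
  Real.sq_sqrt (by positivity)

lemma l2_sub_le (x y : ι → 𝕜) : l2 (x - y) ≤ l2 x + l2 y := by
  simpa only [l2_eq_norm_toLp, WithLp.toLp_sub] using norm_sub_le _ _

lemma norm_star_dotProduct_le (x y : ι → 𝕜) : ‖star x ⬝ᵥ y‖ ≤ l2 x * l2 y := by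
  have h : star x ⬝ᵥ y = inner 𝕜 (WithLp.toLp 2 x) (WithLp.toLp 2 y) := by
    simp [dotProduct, PiLp.inner_apply, RCLike.inner_apply, mul_comm]
  rw [h, l2_eq_norm_toLp, l2_eq_norm_toLp]
  exact norm_inner_le_norm _ _

lemma l2_mulVec_le [DecidableEq κ] (A : Matrix ι κ 𝕜) (x : κ → 𝕜) :
    l2 (A *ᵥ x) ≤ specNorm A * l2 x := by
  rw [l2_eq_norm_toLp, l2_eq_norm_toLp]
  exact (LinearMap.toContinuousLinearMap (Matrix.toEuclideanLin A)).le_opNorm (WithLp.toLp 2 x)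

lemma specNorm_nonneg [DecidableEq κ] (A : Matrix ι κ 𝕜) : 0 ≤ specNorm A := norm_nonneg _

end L2

section Proj

variable {ι : Type*} [DecidableEq ι]

lemma support_proj_subset (T : Finset ι) (a : ι → 𝕜) : Function.support (proj T a) ⊆ T :=
  fun _ hi => by_contra fun h => hi (if_neg h)

lemma proj_sub (T : Finset ι) (a b : ι → 𝕜) : proj T (a - b) = proj T a - proj T b := by
  ext i; by_cases hi : i ∈ T <;> simp [proj, hi]

lemma proj_eq_self {T : Finset ι} {a : ι → 𝕜} (ha : Function.support a ⊆ T) : proj T a = a := by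
  ext i
  by_cases hi : i ∈ T
  · simp [proj, hi]
  · simpa [proj, hi, eq_comm] using mt (@ha i) hi

variable [Fintype ι]

lemma proj_compl_eq_zero {T : Finset ι} {a : ι → 𝕜} (ha : Function.support a ⊆ T) :
    proj Tᶜ a = 0 := by
  ext i
  by_cases hi : i ∈ T
  · simp [proj, hi]
  · simpa [proj, hi] using mt (@ha i) hi

lemma l2_sq_eq_l2_proj_sq_add (T : Finset ι) (a : ι → 𝕜) :
    l2 a ^ 2 = l2 (proj T a) ^ 2 + l2 (proj Tᶜ a) ^ 2 := by
  simp only [l2_sq, proj, Finset.mem_compl]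
  rw [← Finset.sum_add_distrib]
  refine Finset.sum_congr rfl fun i _ => ?_
  by_cases hi : i ∈ T <;> simp [hi]

lemma star_proj_dotProduct_self (T : Finset ι) (a : ι → 𝕜) :
    star (proj T a) ⬝ᵥ a = ((l2 (proj T a) ^ 2 : ℝ) : 𝕜) := by
  rw [l2_sq, dotProduct]
  push_cast
  refine Finset.sum_congr rfl fun i _ => ?_
  by_cases hi : i ∈ T
  · simp [proj, hi, RCLike.conj_mul]
  · simp [proj, hi]

lemma l2_sub_le_two_mul_l2_proj {T : Finset ι} {u a b : ι → 𝕜}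
    (ha : Function.support a ⊆ T) (hb : Function.support b ⊆ T)
    (hbest : l2 (u - a) ≤ l2 (u - b)) : l2 (a - b) ≤ 2 * l2 (proj T (u - b)) := by
  have hcompl {c : ι → 𝕜} (hc : Function.support c ⊆ T) : proj Tᶜ (u - c) = proj Tᶜ u := by
    rw [proj_sub, proj_compl_eq_zero hc, sub_zero]
  have hT : l2 (proj T (u - a)) ≤ l2 (proj T (u - b)) := by
    have := (sq_le_sq₀ (l2_nonneg _) (l2_nonneg _)).2 hbest
    rw [l2_sq_eq_l2_proj_sq_add T (u - a), l2_sq_eq_l2_proj_sq_add T (u - b), hcompl ha,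
      hcompl hb] at this
    exact (sq_le_sq₀ (l2_nonneg _) (l2_nonneg _)).1 (by linarith)
  have hsplit : a - b = proj T (u - b) - proj T (u - a) := by
    rw [← proj_sub, sub_sub_sub_cancel_left, proj_eq_self]
    exact (Function.support_sub a b).trans (Set.union_subset ha hb)
  rw [hsplit]
  linarith [l2_sub_le (proj T (u - b)) (proj T (u - a))]

end Proj

section Theta

variable {ι : Type*} [Fintype ι]

lemma theta_nonneg (s : ℕ) (M : Matrix ι ι 𝕜) : 0 ≤ theta s M :=
  Real.sInf_nonneg fun _ hδ => hδ.1

variable [DecidableEq ι]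

lemma norm_dotProduct_mulVec_sub_le_theta {s : ℕ} (M : Matrix ι ι 𝕜) {J : Finset ι}
    (hJ : J.card ≤ s) {x y : ι → 𝕜} (hx : Function.support x ⊆ J)
    (hy : Function.support y ⊆ J) :
    ‖star y ⬝ᵥ M *ᵥ x - star y ⬝ᵥ x‖ ≤ theta s M * l2 x * l2 y := by
  unfold theta
  rw [mul_assoc]
  refine le_csInf_mul ?_ (mul_nonneg (l2_nonneg x) (l2_nonneg y)) fun δ hδ => ?_
  -- Nonemptiness keeps `sInf` away from its junk value `0` on the empty set.
  · refine ⟨specNorm (M - 1), specNorm_nonneg _, fun _ _ x y _ _ => ?_⟩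
    calc ‖star y ⬝ᵥ M *ᵥ x - star y ⬝ᵥ x‖ = ‖star y ⬝ᵥ (M - 1) *ᵥ x‖ := by
          rw [sub_mulVec, one_mulVec, dotProduct_sub]
      _ ≤ l2 y * l2 ((M - 1) *ᵥ x) := norm_star_dotProduct_le _ _
      _ ≤ l2 y * (specNorm (M - 1) * l2 x) :=
          mul_le_mul_of_nonneg_left (l2_mulVec_le _ _) (l2_nonneg y)
      _ = specNorm (M - 1) * l2 x * l2 y := by ring
  · rw [← mul_assoc]
    exact hδ.2 J hJ x y hx hy

lemma l2_proj_mulVec_sub_le_theta {s : ℕ} (M : Matrix ι ι 𝕜) {J T : Finset ι}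
    (hJ : J.card ≤ s) (hTJ : T ⊆ J) {v : ι → 𝕜} (hv : Function.support v ⊆ J) :
    l2 (proj T (M *ᵥ v - v)) ≤ theta s M * l2 v := by
  set w := proj T (M *ᵥ v - v)
  have hw : Function.support w ⊆ J :=
    (support_proj_subset T _).trans (Finset.coe_subset.2 hTJ)
  have key := norm_dotProduct_mulVec_sub_le_theta M hJ hv hw
  rw [← dotProduct_sub, star_proj_dotProduct_self, RCLike.norm_ofReal,
    abs_of_nonneg (by positivity)] at key
  exact le_of_sq_le_mul (mul_nonneg (theta_nonneg s M) (l2_nonneg v)) key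

end Theta

section Ric

variable {ι κ : Type*} [Fintype ι] [Fintype κ] [DecidableEq κ]

lemma l2_mulVec_sq_le_ric {s : ℕ} (Ψ : Matrix ι κ 𝕜) {x : κ → 𝕜} (hx : Sparse s x) :
    l2 (Ψ *ᵥ x) ^ 2 ≤ (1 + ric s Ψ) * l2 x ^ 2 := by
  suffices l2 (Ψ *ᵥ x) ^ 2 - l2 x ^ 2 ≤ ric s Ψ * l2 x ^ 2 by linarith
  unfold ric
  refine le_csInf_mul ?_ (sq_nonneg _) fun δ hδ => by linarith [(hδ.2 x hx).2]
  refine ⟨specNorm Ψ ^ 2 + 1, by positivity, fun x _ => ⟨?_, ?_⟩⟩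
  · nlinarith [sq_nonneg (specNorm Ψ), sq_nonneg (l2 x), sq_nonneg (l2 (Ψ *ᵥ x))]
  · have := (sq_le_sq₀ (l2_nonneg _) (mul_nonneg (specNorm_nonneg Ψ) (l2_nonneg x))).2
      (l2_mulVec_le Ψ x)
    nlinarith [sq_nonneg (l2 x)]

lemma l2_mulVec_le_sqrt_ric {s : ℕ} (Ψ : Matrix ι κ 𝕜) {x : κ → 𝕜} (hx : Sparse s x) :
    l2 (Ψ *ᵥ x) ≤ √(1 + ric s Ψ) * l2 x := by
  rw [← Real.sqrt_sq (l2_nonneg (Ψ *ᵥ x)), ← Real.sqrt_sq (l2_nonneg x),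
    ← Real.sqrt_mul' _ (sq_nonneg _)]
  exact Real.sqrt_le_sqrt (l2_mulVec_sq_le_ric Ψ hx)

lemma l2_proj_conjTranspose_mulVec_le {s : ℕ} (Ψ : Matrix ι κ 𝕜) {T : Finset κ}
    (hT : T.card ≤ s) (z : ι → 𝕜) :
    l2 (proj T (Ψᴴ *ᵥ z)) ≤ √(1 + ric s Ψ) * l2 z := by
  set w := proj T (Ψᴴ *ᵥ z)
  refine le_of_sq_le_mul (mul_nonneg (Real.sqrt_nonneg _) (l2_nonneg z)) ?_
  calc l2 w ^ 2 = ‖star (Ψ *ᵥ w) ⬝ᵥ z‖ := by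
        rw [star_mulVec, ← dotProduct_mulVec, star_proj_dotProduct_self, RCLike.norm_ofReal,
          abs_of_nonneg (by positivity)]
    _ ≤ l2 (Ψ *ᵥ w) * l2 z := norm_star_dotProduct_le _ _
    _ ≤ √(1 + ric s Ψ) * l2 w * l2 z :=
        mul_le_mul_of_nonneg_right
          (l2_mulVec_le_sqrt_ric Ψ ⟨T, hT, support_proj_subset T _⟩) (l2_nonneg z)
    _ = √(1 + ric s Ψ) * l2 z * l2 w := by ring

end Ric

/-- one iteration of Oblique Iterative Hard Thresholding. -/
theorem statement8 (m n s : ℕ) (Ψ Ψt : Matrix (Fin m) (Fin n) 𝕜)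
    (xstar x xplus : Fin n → 𝕜) (hxstar : Sparse s xstar) (hx : Sparse s x)
    (z y : Fin m → 𝕜) (hy : y = Ψ.mulVec xstar + z)
    (hplus_sparse : Sparse s xplus)
    (hplus_best : ∀ w : Fin n → 𝕜, Sparse s w →
      l2 (x + Ψtᴴ.mulVec (y - Ψ.mulVec x) - xplus) ≤
        l2 (x + Ψtᴴ.mulVec (y - Ψ.mulVec x) - w)) :
    l2 (xplus - xstar) ≤
      2 * theta (3 * s) (Ψtᴴ * Ψ) * l2 (x - xstar) +
        2 * Real.sqrt (1 + ric (2 * s) Ψt) * l2 z := by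
  obtain ⟨Jp, hJp, hsuppP⟩ := hplus_sparse
  obtain ⟨Js, hJs, hsuppS⟩ := hxstar
  obtain ⟨Jx, hJx, hsuppX⟩ := hx
  set T := Jp ∪ Js
  have hT : T.card ≤ 2 * s := (Finset.card_union_le _ _).trans (by omega)
  have hTx : (T ∪ Jx).card ≤ 3 * s := (Finset.card_union_le _ _).trans (by omega)
  have hv : Function.support (x - xstar) ⊆ ↑(T ∪ Jx) :=
    (Function.support_sub _ _).trans <| Set.union_subset
      (fun i hi => Finset.mem_union_right _ (hsuppX i hi))
      (fun i hi => Finset.mem_union_left _ (Finset.mem_union_right _ (hsuppS i hi)))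
  have hdec : x + Ψtᴴ *ᵥ (y - Ψ *ᵥ x) - xstar =
      Ψtᴴ *ᵥ z - ((Ψtᴴ * Ψ) *ᵥ (x - xstar) - (x - xstar)) := by
    simp only [hy, mulVec_sub, mulVec_add, mulVec_mulVec]
    abel
  calc l2 (xplus - xstar)
      ≤ 2 * l2 (proj T (x + Ψtᴴ *ᵥ (y - Ψ *ᵥ x) - xstar)) :=
        l2_sub_le_two_mul_l2_proj (fun i hi => Finset.mem_union_left _ (hsuppP i hi))
          (fun i hi => Finset.mem_union_right _ (hsuppS i hi)) (hplus_best xstar ⟨Js, hJs, hsuppS⟩)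
    _ ≤ 2 * (l2 (proj T (Ψtᴴ *ᵥ z)) + l2 (proj T ((Ψtᴴ * Ψ) *ᵥ (x - xstar) - (x - xstar)))) := by
        rw [hdec, proj_sub]
        gcongr
        exact l2_sub_le _ _
    _ ≤ 2 * (√(1 + ric (2 * s) Ψt) * l2 z + theta (3 * s) (Ψtᴴ * Ψ) * l2 (x - xstar)) := by
        gcongr
        · exact l2_proj_conjTranspose_mulVec_le Ψt hT z
        · exact l2_proj_mulVec_sub_le_theta _ hTx Finset.subset_union_left hv
    _ = _ := by ring

end ObliquePursuit
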